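/- Let H = (A,B,E) be a bipartite graph, q ≥ 2, and let c be a uniformly random proper coloring of H with q colors. If u and v are two distinct vertices in the same part (both in A or both in B), then P(c(u) = c(v)) ≥ 1/q. -/

import Mathlib

/-!
Fix two colours `i ≠ j`. In a proper colouring `c` with `c u = i` and `c v = j`, swap `i` and `j`
on the Kempe chain of `v` (its component in the subgraph spanned by the colours `i, j`). This is an
involution on proper colourings. Along a Kempe chain the colours alternate while the sides of the
bipartition alternate, so the chain of `v` meets the side of `v` only in colour `j`; hence it misses
`u`, and the swap sends `c` to a colouring with `c u = c v = i`. Thus for every `i` each of the `q`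
classes `{c u = i, c v = j}` is at most as large as `{c u = c v = i}`, and summing over `i` gives
`#{proper colourings} ≤ q · #{c u = c v}`.
-/

open SimpleGraph Finset

/-- Number of proper colorings of a graph with q colors. -/
noncomputable def chrom {V : Type*} (H : SimpleGraph V) (q : ℕ) : ℕ :=
  Nat.card {c : V → Fin q // ∀ a b, H.Adj a b → c a ≠ c b}

theorem SimpleGraph.Reachable.eq_of_forall_adj {V β : Type*} {G : SimpleGraph V} {f : V → β}
    (hf : ∀ a b, G.Adj a b → f a = f b) {a b : V} (h : G.Reachable a b) : f a = f b := by
  obtain ⟨p⟩ := h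
  induction p with
  | nil => rfl
  | cons hadj _ ih => exact (hf _ _ hadj).trans ih

theorem Equiv.swap_apply_eq_or_eq_iff {α : Type*} [DecidableEq α] {i j x : α} :
    (Equiv.swap i j x = i ∨ Equiv.swap i j x = j) ↔ (x = i ∨ x = j) := by
  rw [Equiv.swap_apply_def]
  split_ifs <;> grind

theorem Finset.card_le_card_mul_card_filter_eq {ι β : Type*} [Fintype β] [DecidableEq β]
    (s : Finset ι) (f g : ι → β)
    (h : ∀ i j, #{x ∈ s | f x = i ∧ g x = j} ≤ #{x ∈ s | f x = i ∧ g x = i}) :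
    #s ≤ Fintype.card β * #{x ∈ s | f x = g x} := by
  have hrow (i : β) :
      #{x ∈ s | f x = i} ≤ Fintype.card β * #{x ∈ s | f x = i ∧ g x = i} :=
    calc #{x ∈ s | f x = i}
        = ∑ j, #{x ∈ s | f x = i ∧ g x = j} := by
          rw [card_eq_sum_card_fiberwise (f := g) (t := univ) fun _ _ => mem_univ _]
          simp only [filter_filter]
      _ ≤ ∑ _j : β, #{x ∈ s | f x = i ∧ g x = i} := sum_le_sum fun j _ => h i j
      _ = Fintype.card β * #{x ∈ s | f x = i ∧ g x = i} := by simp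
  calc #s = ∑ i, #{x ∈ s | f x = i} := card_eq_sum_card_fiberwise fun _ _ => mem_univ _
    _ ≤ ∑ i, Fintype.card β * #{x ∈ s | f x = i ∧ g x = i} := sum_le_sum fun i _ => hrow i
    _ = Fintype.card β * #{x ∈ s | f x = g x} := by
      rw [← mul_sum, card_eq_sum_card_fiberwise (f := f) (t := univ) fun _ _ => mem_univ _]
      congr 1
      refine sum_congr rfl fun i _ => ?_
      rw [filter_filter]
      congr 1
      refine filter_congr fun x _ => ?_
      constructor
      · rintro ⟨hf, hg⟩; exact ⟨hf.trans hg.symm, hf⟩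
      · rintro ⟨hfg, hf⟩; exact ⟨hf, hfg.symm.trans hf⟩

section Kempe

variable {V α : Type*} (H : SimpleGraph V) (c : V → α) (i j : α)

def kempeGraph : SimpleGraph V where
  Adj a b := H.Adj a b ∧ (c a = i ∨ c a = j) ∧ (c b = i ∨ c b = j)
  symm := ⟨fun _ _ ⟨h, ha, hb⟩ => ⟨h.symm, hb, ha⟩⟩
  loopless := ⟨fun a ⟨h, _⟩ => H.loopless.irrefl a h⟩

variable {H c i j} in
theorem not_reachable_kempeGraph_of_bipartite (hc : ∀ a b, H.Adj a b → c a ≠ c b) {A : Set V}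
    (hbip : ∀ a b, H.Adj a b → (a ∈ A ↔ b ∉ A)) (hij : i ≠ j) {u v : V}
    (hsame : u ∈ A ↔ v ∈ A) (hu : c u = i) (hv : c v = j) :
    ¬(kempeGraph H c i j).Reachable v u := by
  intro h
  have hinv :
      ∀ a b, (kempeGraph H c i j).Adj a b → (c a = j ↔ a ∈ A) = (c b = j ↔ b ∈ A) := by
    rintro a b ⟨hab, ha, hb⟩
    have := hbip a b hab
    have := hc a b hab
    apply propext
    rcases ha with ha | ha <;> rcases hb with hb | hb <;> simp_all [eq_comm]
  have := h.eq_of_forall_adj hinv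
  simp only [hu, hv, true_iff, hij, false_iff] at this
  tauto

variable [DecidableEq α]

open Classical in
noncomputable def kempeSwap (v : V) : V → α :=
  fun w => if (kempeGraph H c i j).Reachable v w then Equiv.swap i j (c w) else c w

variable {H c i j}

theorem kempeSwap_of_reachable {v w : V} (h : (kempeGraph H c i j).Reachable v w) :
    kempeSwap H c i j v w = Equiv.swap i j (c w) := if_pos h

theorem kempeSwap_of_not_reachable {v w : V} (h : ¬(kempeGraph H c i j).Reachable v w) :
    kempeSwap H c i j v w = c w := if_neg h

theorem kempeSwap_self (v : V) : kempeSwap H c i j v v = Equiv.swap i j (c v) :=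
  kempeSwap_of_reachable (Reachable.refl v)

theorem kempeGraph_kempeSwap (v : V) :
    kempeGraph H (kempeSwap H c i j v) i j = kempeGraph H c i j := by
  have hmem (w : V) :
      (kempeSwap H c i j v w = i ∨ kempeSwap H c i j v w = j) ↔ (c w = i ∨ c w = j) := by
    by_cases h : (kempeGraph H c i j).Reachable v w
    · rw [kempeSwap_of_reachable h, Equiv.swap_apply_eq_or_eq_iff]
    · rw [kempeSwap_of_not_reachable h]
  ext a b
  simp only [kempeGraph, hmem]

theorem kempeSwap_involutive (v : V) : Function.Involutive (fun c => kempeSwap H c i j v) := by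
  intro c
  funext w
  change kempeSwap H (kempeSwap H c i j v) i j v w = c w
  by_cases h : (kempeGraph H c i j).Reachable v w
  · rw [kempeSwap_of_reachable (kempeGraph_kempeSwap (c := c) v ▸ h), kempeSwap_of_reachable h,
      Equiv.swap_apply_self]
  · rw [kempeSwap_of_not_reachable (kempeGraph_kempeSwap (c := c) v ▸ h),
      kempeSwap_of_not_reachable h]

variable (hc : ∀ a b, H.Adj a b → c a ≠ c b)
include hc

theorem kempeSwap_ne_of_adj_of_reachable {v a b : V} (hab : H.Adj a b)
    (ha : (kempeGraph H c i j).Reachable v a) :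
    kempeSwap H c i j v a ≠ kempeSwap H c i j v b := by
  rw [kempeSwap_of_reachable ha]
  by_cases hb : (kempeGraph H c i j).Reachable v b
  · rw [kempeSwap_of_reachable hb]
    exact (Equiv.injective _).ne (hc a b hab)
  rw [kempeSwap_of_not_reachable hb]
  intro hswap
  by_cases hca : c a = i ∨ c a = j
  · have hcb : c b = i ∨ c b = j := hswap ▸ Equiv.swap_apply_eq_or_eq_iff.mpr hca
    exact hb (ha.trans (Adj.reachable ⟨hab, hca, hcb⟩))
  · rw [not_or] at hca
    exact hc a b hab (by rwa [Equiv.swap_apply_of_ne_of_ne hca.1 hca.2] at hswap)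

theorem kempeSwap_ne_of_adj (v : V) {a b : V} (hab : H.Adj a b) :
    kempeSwap H c i j v a ≠ kempeSwap H c i j v b := by
  by_cases ha : (kempeGraph H c i j).Reachable v a
  · exact kempeSwap_ne_of_adj_of_reachable hc hab ha
  by_cases hb : (kempeGraph H c i j).Reachable v b
  · exact (kempeSwap_ne_of_adj_of_reachable hc hab.symm hb).symm
  rw [kempeSwap_of_not_reachable ha, kempeSwap_of_not_reachable hb]
  exact hc a b hab

end Kempe

section ProperColorings

variable {V : Type*} [Fintype V] [DecidableEq V] {H : SimpleGraph V} [DecidableRel H.Adj]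
  {α : Type*} [Fintype α] [DecidableEq α]

variable (H α) in
def properColorings : Finset (V → α) :=
  {c | ∀ a b, H.Adj a b → c a ≠ c b}

@[simp]
theorem mem_properColorings {c : V → α} :
    c ∈ properColorings H α ↔ ∀ a b, H.Adj a b → c a ≠ c b := by
  simp [properColorings]

variable {A : Set V} (hbip : ∀ a b, H.Adj a b → (a ∈ A ↔ b ∉ A))
include hbip

theorem properColorings_nonempty_of_bipartite [Nontrivial α] :
    (properColorings H α).Nonempty := by
  classical
  obtain ⟨x, y, hxy⟩ := exists_pair_ne α
  refine ⟨fun w => if w ∈ A then x else y, mem_properColorings.mpr fun a b hab => ?_⟩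
  have := hbip a b hab
  by_cases ha : a ∈ A <;> simp_all [eq_comm]

theorem card_filter_properColorings_le_of_bipartite {u v : V} (hsame : u ∈ A ↔ v ∈ A)
    (i j : α) :
    #{c ∈ properColorings H α | c u = i ∧ c v = j} ≤
      #{c ∈ properColorings H α | c u = i ∧ c v = i} := by
  rcases eq_or_ne i j with rfl | hij
  · rfl
  refine card_le_card_of_injOn (kempeSwap H · i j v) ?_ (kempeSwap_involutive v).injective.injOn
  intro c hc
  simp only [coe_filter, mem_properColorings] at hc ⊢
  obtain ⟨hc, hu, hv⟩ := hc
  refine ⟨fun a b => kempeSwap_ne_of_adj hc v, ?_, ?_⟩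
  · rw [kempeSwap_of_not_reachable
      (not_reachable_kempeGraph_of_bipartite hc hbip hij hsame hu hv), hu]
  · rw [kempeSwap_self, hv, Equiv.swap_apply_right]

end ProperColorings

theorem stmt_10_general {V : Type*} [Fintype V] (H : SimpleGraph V) (A : Set V)
    (hbip : ∀ a b, H.Adj a b → (a ∈ A ↔ b ∉ A)) (q : ℕ) (hq : 2 ≤ q)
    (u v : V) (hsame : u ∈ A ↔ v ∈ A) :
    (Nat.card {c : V → Fin q // (∀ a b, H.Adj a b → c a ≠ c b) ∧ c u = c v} : ℝ) /
      (chrom H q : ℝ) ≥ 1 / q := by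
  classical
  have hchrom : chrom H q = #(properColorings H (Fin q)) := by
    rw [chrom, Nat.card_eq_fintype_card, Fintype.card_subtype, properColorings]
  have hdiag : Nat.card {c : V → Fin q // (∀ a b, H.Adj a b → c a ≠ c b) ∧ c u = c v} =
      #{c ∈ properColorings H (Fin q) | c u = c v} := by
    rw [Nat.card_eq_fintype_card, Fintype.card_subtype, properColorings, filter_filter]
  have hpos : 0 < #(properColorings H (Fin q)) :=
    have := Fin.nontrivial_iff_two_le.mpr hq
    card_pos.mpr (properColorings_nonempty_of_bipartite hbip)
  have hle := card_le_card_mul_card_filter_eq (properColorings H (Fin q)) (fun c => c u)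
    (fun c => c v) (card_filter_properColorings_le_of_bipartite hbip hsame)
  rw [Fintype.card_fin] at hle
  rw [hchrom, hdiag, ge_iff_le, div_le_div_iff₀ (by positivity) (by exact_mod_cast hpos), one_mul]
  exact_mod_cast hle.trans_eq (mul_comm _ _)

theorem stmt_10 {V : Type*} [Fintype V] (H : SimpleGraph V) (A : Set V)
    (hbip : ∀ a b, H.Adj a b → (a ∈ A ↔ b ∉ A)) (q : ℕ) (hq : 2 ≤ q)
    (u v : V) (hsame : u ∈ A ↔ v ∈ A) (huv : u ≠ v) :
    (Nat.card {c : V → Fin q // (∀ a b, H.Adj a b → c a ≠ c b) ∧ c u = c v} : ℝ) /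
      (chrom H q : ℝ) ≥ 1 / q :=
  stmt_10_general H A hbip q hq u v hsame
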